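/- arXiv:2402.08412 — 2 statements merged into one kernel-verified Lean document; each statement's English description precedes it below -/
import Mathlib

section
/- Let $H$ be a Hilbert space (of interaction kernels with norm $\|\cdot\|_\rho$), let $N \geq 2$, and let $\mathcal{M}$ denote the set of matrices $\mathbf{a} \in [0,1]^{N \times N}$ with zero diagonal and each row of unit $\ell^2$-norm. Suppose a bilinear error functional satisfies the rank-2 joint coercivity bound: for all orthogonal $\Phi_1, \Phi_2 \in H$ and all rows $a^{(1)}, a^{(2)}$, $\mathcal{E}^{(i)}(a^{(1)}, \Phi_1; a^{(2)}, \Phi_2) \geq c_H (|a^{(1)}|^2 \|\Phi_1\|_\rho^2 + |a^{(2)}|^2 \|\Phi_2\|_\rho^2)$ with $c_H > 0$, where $\mathcal{E}^{(i)}$ is the expected squared residual between two matrix-kernel pairs. Then if the true parameters are $\mathbf{a}^* \in \mathcal{M}$ and $\Phi_* \in H \setminus \{0\}$, the pair $(\mathbf{a}^*, \Phi_*)$ is the unique zero of the population loss $\mathcal{E}(\mathbf{a}, \Phi) = \sum_i \mathbb{E}\big[\big|\sum_{j \neq i}(\mathbf{a}_{ij}\Phi(\mathbf{r}_{ij}) -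 \mathbf{a}^*_{ij}\Phi_*(\mathbf{r}_{ij}))\big|^2\big]$ over $\mathcal{M} \times H$. -/
open MeasureTheory Finset
open scoped RealInnerProductSpace

/-!
Write `Φ = p • Φ* + Ψ` with `Ψ ⟂ Φ*`. Row `i` of the residual then becomes
`∑ⱼ ((p aᵢⱼ - a*ᵢⱼ) • Φ*(rᵢⱼ) + aᵢⱼ • Ψ(rᵢⱼ))`, a combination of two orthogonal kernels, so
rank-2 coercivity turns a vanishing loss into `|p aᵢ. - a*ᵢ.|² ‖Φ*‖² = 0` and `|aᵢ.|² ‖Ψ‖² = 0`.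
Unit rows force `Ψ = 0`, and `Φ* ≠ 0` forces `a* = p a`; finally two nonnegative unit vectors
that are proportional coincide, so `p = 1`.
-/

section Projection

variable {H : Type*} [NormedAddCommGroup H] [InnerProductSpace ℝ H]

lemma inner_sub_smul_inner_div_norm_sq_eq_zero (Φ v : H) :
    ⟪v, Φ - (⟪Φ, v⟫ / ‖v‖ ^ 2) • v⟫ = 0 := by
  rcases eq_or_ne v 0 with rfl | hv
  · simp
  rw [inner_sub_right, inner_smul_right, real_inner_self_eq_norm_sq, real_inner_comm]
  field_simp
  ring

end Projection

section UnitVectors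

variable {ι : Type*} [Fintype ι]

lemma eq_one_of_mul_eq_of_sum_sq_eq_one {u v : ι → ℝ} {p : ℝ}
    (hu : ∀ j, 0 ≤ u j) (hv : ∀ j, 0 ≤ v j)
    (hu1 : ∑ j, u j ^ 2 = 1) (hv1 : ∑ j, v j ^ 2 = 1) (huv : ∀ j, p * u j = v j) :
    p = 1 := by
  have hp_sq : p ^ 2 = 1 := by
    rw [← hv1, ← mul_one (p ^ 2), ← hu1, mul_sum]
    exact sum_congr rfl fun j _ => by rw [← huv]; ring
  have hp_nonneg : 0 ≤ p := by
    have : p = ∑ j, u j * v j := by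
      rw [← mul_one p, ← hu1, mul_sum]
      exact sum_congr rfl fun j _ => by rw [← huv]; ring
    rw [this]
    exact sum_nonneg fun j _ => mul_nonneg (hu j) (hv j)
  nlinarith

variable [DecidableEq ι]

lemma sum_erase_sq_eq_sum_sq {u : ι → ℝ} {i : ι} (hi : u i = 0) :
    ∑ j ∈ univ.erase i, u j ^ 2 = ∑ j, u j ^ 2 :=
  sum_erase _ (by simp [hi])

lemma eq_of_sum_erase_sq_sub_eq_zero {u v : ι → ℝ} {i : ι} (hu : u i = 0) (hv : v i = 0)
    (h : ∑ j ∈ univ.erase i, (u j - v j) ^ 2 = 0) : u = v := by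
  rw [sum_erase (f := fun j => (u j - v j) ^ 2) _ (by simp [hu, hv])] at h
  funext j
  have := (sum_eq_zero_iff_of_nonneg fun j _ => sq_nonneg _).mp h j (mem_univ j)
  simpa [sub_eq_zero] using this

end UnitVectors

theorem stmt_1_general {Ω : Type*} [MeasurableSpace Ω] (μ : Measure Ω)
    {H : Type*} [NormedAddCommGroup H] [InnerProductSpace ℝ H]
    {E : Type*} [NormedAddCommGroup E] [InnerProductSpace ℝ E]
    {N : ℕ} (hN : 2 ≤ N)
    (ev : H →ₗ[ℝ] (Fin N → Fin N → Ω → E))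
    (cH : ℝ) (hcH : 0 < cH)
    (hcoer : ∀ (Φ₁ Φ₂ : H), ⟪Φ₁, Φ₂⟫ = 0 →
      ∀ (i : Fin N) (b₁ b₂ : Fin N → ℝ),
        cH * ((∑ j ∈ univ.erase i, (b₁ j) ^ 2) * ‖Φ₁‖ ^ 2
              + (∑ j ∈ univ.erase i, (b₂ j) ^ 2) * ‖Φ₂‖ ^ 2)
          ≤ ∫ ω, ‖∑ j ∈ univ.erase i,
                (b₁ j • ev Φ₁ i j ω + b₂ j • ev Φ₂ i j ω)‖ ^ 2 ∂μ)
    (aStar : Fin N → Fin N → ℝ)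
    (haStar : (∀ i j, 0 ≤ aStar i j ∧ aStar i j ≤ 1) ∧ (∀ i, aStar i i = 0)
      ∧ ∀ i, ∑ j, (aStar i j) ^ 2 = 1)
    (ΦStar : H) (hΦStar : ΦStar ≠ 0)
    (a : Fin N → Fin N → ℝ)
    (ha : (∀ i j, 0 ≤ a i j ∧ a i j ≤ 1) ∧ (∀ i, a i i = 0)
      ∧ ∀ i, ∑ j, (a i j) ^ 2 = 1)
    (Φ : H)
    (hloss : ∑ i, ∫ ω, ‖∑ j ∈ univ.erase i,
        (a i j • ev Φ i j ω - aStar i j • ev ΦStar i j ω)‖ ^ 2 ∂μ = 0) :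
    a = aStar ∧ Φ = ΦStar := by
  obtain ⟨haStar_bd, haStar_diag, haStar_row⟩ := haStar
  obtain ⟨ha_bd, ha_diag, ha_row⟩ := ha
  set p := ⟪Φ, ΦStar⟫ / ‖ΦStar‖ ^ 2
  set Ψ := Φ - p • ΦStar
  have hrow : ∀ i, (∑ j ∈ univ.erase i, (p * a i j - aStar i j) ^ 2) * ‖ΦStar‖ ^ 2
      + (∑ j ∈ univ.erase i, a i j ^ 2) * ‖Ψ‖ ^ 2 ≤ 0 := by
    intro i
    have hloss_i := (sum_eq_zero_iff_of_nonneg fun i _ =>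
      integral_nonneg fun ω => by positivity).mp hloss i (mem_univ i)
    have hcoer_i := hcoer ΦStar Ψ (inner_sub_smul_inner_div_norm_sq_eq_zero Φ ΦStar) i
      (fun j => p * a i j - aStar i j) (a i)
    have hresidual : ∀ ω j, (p * a i j - aStar i j) • ev ΦStar i j ω + a i j • ev Ψ i j ω
        = a i j • ev Φ i j ω - aStar i j • ev ΦStar i j ω := by
      intro ω j
      simp only [Ψ, map_sub, map_smul, Pi.sub_apply, Pi.smul_apply]
      module
    simp only [hresidual, hloss_i] at hcoer_i
    exact nonpos_of_mul_nonpos_right hcoer_i hcH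
  have hΦStar_sq : 0 < ‖ΦStar‖ ^ 2 := by positivity
  have hrow_nonneg : ∀ i, 0 ≤ (∑ j ∈ univ.erase i, (p * a i j - aStar i j) ^ 2) := fun i =>
    sum_nonneg fun j _ => sq_nonneg _
  have hpa : ∀ i, (fun j => p * a i j) = aStar i := fun i =>
    eq_of_sum_erase_sq_sub_eq_zero (by simp [ha_diag]) (haStar_diag i) <| by
      nlinarith [hrow i, hrow_nonneg i, sq_nonneg ‖Ψ‖,
        sum_nonneg fun j (_ : j ∈ univ.erase i) => sq_nonneg (a i j)]
  let i₀ : Fin N := ⟨0, by omega⟩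
  have hΨ : Φ - p • ΦStar = 0 := by
    have := hrow i₀
    rw [sum_erase_sq_eq_sum_sq (ha_diag i₀), ha_row i₀] at this
    exact norm_eq_zero.mp <| pow_eq_zero_iff two_ne_zero |>.mp <| by
      nlinarith [hrow_nonneg i₀, sq_nonneg ‖Ψ‖]
  have hp : p = 1 :=
    eq_one_of_mul_eq_of_sum_sq_eq_one (fun j => (ha_bd i₀ j).1) (fun j => (haStar_bd i₀ j).1)
      (ha_row i₀) (haStar_row i₀) (congrFun (hpa i₀))
  refine ⟨funext fun i => ?_, ?_⟩
  · simpa [hp] using hpa i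
  · rwa [hp, one_smul, sub_eq_zero] at hΨ

/-- rank-2 joint coercivity implies identifiability of the pair
(weight matrix, interaction kernel). Here `H` is the Hilbert space of kernels,
`ev` is the (linear) evaluation of a kernel on the pairwise differences
`r_{ij}` as random vectors, and the population loss vanishes exactly at the
true parameters. -/
theorem stmt_1 {Ω : Type*} [MeasurableSpace Ω] (μ : Measure Ω) [IsProbabilityMeasure μ]
    {H : Type*} [NormedAddCommGroup H] [InnerProductSpace ℝ H]
    {E : Type*} [NormedAddCommGroup E] [InnerProductSpace ℝ E]
    {N : ℕ} (hN : 2 ≤ N)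
    (ev : H →ₗ[ℝ] (Fin N → Fin N → Ω → E))
    (cH : ℝ) (hcH : 0 < cH)
    (hcoer : ∀ (Φ₁ Φ₂ : H), ⟪Φ₁, Φ₂⟫ = 0 →
      ∀ (i : Fin N) (b₁ b₂ : Fin N → ℝ),
        cH * ((∑ j ∈ univ.erase i, (b₁ j) ^ 2) * ‖Φ₁‖ ^ 2
              + (∑ j ∈ univ.erase i, (b₂ j) ^ 2) * ‖Φ₂‖ ^ 2)
          ≤ ∫ ω, ‖∑ j ∈ univ.erase i,
                (b₁ j • ev Φ₁ i j ω + b₂ j • ev Φ₂ i j ω)‖ ^ 2 ∂μ)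
    (aStar : Fin N → Fin N → ℝ)
    (haStar : (∀ i j, 0 ≤ aStar i j ∧ aStar i j ≤ 1) ∧ (∀ i, aStar i i = 0)
      ∧ ∀ i, ∑ j, (aStar i j) ^ 2 = 1)
    (ΦStar : H) (hΦStar : ΦStar ≠ 0)
    (a : Fin N → Fin N → ℝ)
    (ha : (∀ i j, 0 ≤ a i j ∧ a i j ≤ 1) ∧ (∀ i, a i i = 0)
      ∧ ∀ i, ∑ j, (a i j) ^ 2 = 1)
    (Φ : H)
    (hloss : ∑ i, ∫ ω, ‖∑ j ∈ univ.erase i,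
        (a i j • ev Φ i j ω - aStar i j • ev ΦStar i j ω)‖ ^ 2 ∂μ = 0) :
    a = aStar ∧ Φ = ΦStar :=
  stmt_1_general μ hN ev cH hcH hcoer aStar haStar ΦStar hΦStar a ha Φ hloss
end

section
/- Evaluate: $\int_0^\infty \int_0^\infty e^{-\frac{5(r^2+s^2)}{12}}\Big[\frac{3}{2rs}\big(e^{\frac{2rs}{3}} - e^{-\frac{2rs}{3}}\big) - 2\Big] r^2 s^2\, dr\, ds = 8\pi - \frac{216\pi}{125} = \frac{784\pi}{125}$. -/
/-!
For fixed `r` the inner integral splits into a first-moment and a second-moment Gaussian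
integral. Folding `s ↦ -s` turns `∫₀^∞ s e^{-as²} (e^{cs} - e^{-cs}) ds` into the full-line
integral `∫ s e^{-as² + cs} ds`, which completing the square evaluates to
`c/(2a) · √(π/a) · e^{c²/(4a)}`. With `c = b r` the inner integral becomes
`√(π/a)/(2a) · r² (e^{-a' r²} - e^{-a r²})` where `a' = a - b²/(4a)`, and the outer integral is a
difference of half-line second moments `∫₀^∞ r² e^{-β r²} dr = √(π/β)/(4β)`. For `a = 5/12`,
`b = 2/3` one gets `a' = 3/20` and `√(π/a) √(π/a') = 4π`.
-/

open Real MeasureTheory Set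

lemma mul_exp_neg_mul_sq_add_mul_eq {a : ℝ} (ha : a ≠ 0) (c s : ℝ) :
    s * rexp (-a * s ^ 2 + c * s) = rexp (c ^ 2 / (4 * a)) *
      ((s - c / (2 * a)) * rexp (-a * (s - c / (2 * a)) ^ 2)
        + c / (2 * a) * rexp (-a * (s - c / (2 * a)) ^ 2)) := by
  rw [← add_mul, sub_add_cancel, mul_left_comm, ← exp_add]
  congr 2
  field_simp
  ring

lemma integrable_mul_exp_neg_mul_sq_add_mul {a : ℝ} (ha : 0 < a) (c : ℝ) :
    Integrable (fun s : ℝ => s * rexp (-a * s ^ 2 + c * s)) := by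
  simp_rw [mul_exp_neg_mul_sq_add_mul_eq ha.ne']
  exact (((integrable_mul_exp_neg_mul_sq ha).comp_sub_right _).add
    (((integrable_exp_neg_mul_sq ha).comp_sub_right _).const_mul _)).const_mul _

lemma integral_mul_exp_neg_mul_sq_eq_zero (a : ℝ) : ∫ t : ℝ, t * rexp (-a * t ^ 2) = 0 := by
  have h := integral_neg_eq_self (fun t : ℝ => t * rexp (-a * t ^ 2)) volume
  simp only [neg_sq, neg_mul, integral_neg] at h ⊢
  linarith

lemma integral_mul_exp_neg_mul_sq_add_mul {a : ℝ} (ha : 0 < a) (c : ℝ) :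
    ∫ s : ℝ, s * rexp (-a * s ^ 2 + c * s)
      = c / (2 * a) * √(π / a) * rexp (c ^ 2 / (4 * a)) := by
  simp_rw [mul_exp_neg_mul_sq_add_mul_eq ha.ne']
  rw [integral_const_mul,
    integral_add ((integrable_mul_exp_neg_mul_sq ha).comp_sub_right _)
      (((integrable_exp_neg_mul_sq ha).comp_sub_right _).const_mul _),
    integral_sub_right_eq_self (fun t => t * rexp (-a * t ^ 2)),
    integral_mul_exp_neg_mul_sq_eq_zero, integral_const_mul,
    integral_sub_right_eq_self (fun t => rexp (-a * t ^ 2)), integral_gaussian]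
  ring

lemma integral_Ioi_add_comp_neg {E : Type*} [NormedAddCommGroup E] [NormedSpace ℝ E]
    {f : ℝ → E} (hf : Integrable f) :
    ∫ x in Ioi 0, (f x + f (-x)) = ∫ x, f x := by
  rw [integral_add hf.integrableOn hf.comp_neg.integrableOn, integral_comp_neg_Ioi, neg_zero,
    add_comm, intervalIntegral.integral_Iic_add_Ioi hf.integrableOn hf.integrableOn]

lemma mul_exp_neg_mul_sq_mul_sub_eq (a c s : ℝ) :
    s * rexp (-a * s ^ 2) * (rexp (c * s) - rexp (-(c * s)))
      = s * rexp (-a * s ^ 2 + c * s) + -s * rexp (-a * (-s) ^ 2 + c * -s) := by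
  simp only [exp_add, neg_sq, mul_neg]
  ring

lemma integrable_mul_exp_neg_mul_sq_mul_sub {a : ℝ} (ha : 0 < a) (c : ℝ) :
    Integrable (fun s : ℝ => s * rexp (-a * s ^ 2) * (rexp (c * s) - rexp (-(c * s)))) := by
  simp_rw [mul_exp_neg_mul_sq_mul_sub_eq]
  have h := integrable_mul_exp_neg_mul_sq_add_mul ha c
  exact h.add h.comp_neg

lemma integral_Ioi_mul_exp_neg_mul_sq_mul_sub {a : ℝ} (ha : 0 < a) (c : ℝ) :
    ∫ s in Ioi 0, s * rexp (-a * s ^ 2) * (rexp (c * s) - rexp (-(c * s)))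
      = c / (2 * a) * √(π / a) * rexp (c ^ 2 / (4 * a)) := by
  simp_rw [mul_exp_neg_mul_sq_mul_sub_eq]
  rw [integral_Ioi_add_comp_neg (f := fun s => s * rexp (-a * s ^ 2 + c * s))
    (integrable_mul_exp_neg_mul_sq_add_mul ha c), integral_mul_exp_neg_mul_sq_add_mul ha]

lemma integrableOn_Ioi_sq_mul_exp_neg_mul_sq {b : ℝ} (hb : 0 < b) :
    IntegrableOn (fun x : ℝ => x ^ 2 * rexp (-b * x ^ 2)) (Ioi 0) := by
  simpa only [rpow_two] using integrableOn_rpow_mul_exp_neg_mul_sq hb (s := 2) (by norm_num)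

lemma integral_Ioi_sq_mul_exp_neg_mul_sq {b : ℝ} (hb : 0 < b) :
    ∫ x in Ioi 0, x ^ 2 * rexp (-b * x ^ 2) = √(π / b) / (4 * b) := by
  have h := integral_rpow_mul_exp_neg_mul_rpow (p := 2) (q := 2) two_pos (by norm_num) hb
  have hGamma : Gamma ((2 + 1) / 2) = √π / 2 := by
    rw [show ((2 : ℝ) + 1) / 2 = 1 / 2 + 1 by norm_num, Gamma_add_one (by norm_num),
      Gamma_one_half_eq]
    ring
  have hpow : b ^ (-((2 : ℝ) + 1) / 2) = (b * √b)⁻¹ := by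
    rw [show -((2 : ℝ) + 1) / 2 = -(1 + 1 / 2) by norm_num, rpow_neg hb.le, rpow_add hb,
      rpow_one, ← sqrt_eq_rpow]
  simp only [rpow_two] at h
  rw [h, hGamma, hpow, sqrt_div' _ hb.le]
  field_simp
  norm_num

/-- `e^{-a(r² + s²)} · 2 (sinh x / x - 1) · r² s²` with `x = b r s`. -/
noncomputable def gaussianSinhIntegrand (a b r s : ℝ) : ℝ :=
  rexp (-(a * (r ^ 2 + s ^ 2))) *
    ((1 / (b * r * s)) * (rexp (b * r * s) - rexp (-(b * r * s))) - 2) * (r ^ 2 * s ^ 2)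

lemma integral_Ioi_gaussianSinhIntegrand {a b r : ℝ} (ha : 0 < a) (hb : b ≠ 0) (hr : r ≠ 0) :
    ∫ s in Ioi 0, gaussianSinhIntegrand a b r s
      = √(π / a) / (2 * a) *
          (r ^ 2 * rexp (-(a - b ^ 2 / (4 * a)) * r ^ 2) - r ^ 2 * rexp (-a * r ^ 2)) := by
  have hsplit : ∀ s ∈ Ioi (0 : ℝ), gaussianSinhIntegrand a b r s =
      r / b * rexp (-a * r ^ 2) *
          (s * rexp (-a * s ^ 2) * (rexp (b * r * s) - rexp (-(b * r * s))))
        - 2 * r ^ 2 * rexp (-a * r ^ 2) * (s ^ 2 * rexp (-a * s ^ 2)) := by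
    intro s hs
    have hs : s ≠ 0 := (mem_Ioi.mp hs).ne'
    rw [gaussianSinhIntegrand, show -(a * (r ^ 2 + s ^ 2)) = -a * r ^ 2 + -a * s ^ 2 by ring,
      exp_add]
    field_simp
  rw [setIntegral_congr_fun measurableSet_Ioi hsplit,
    integral_sub ((integrable_mul_exp_neg_mul_sq_mul_sub ha (b * r)).integrableOn.const_mul _)
      ((integrableOn_Ioi_sq_mul_exp_neg_mul_sq ha).const_mul _),
    integral_const_mul, integral_const_mul, integral_Ioi_mul_exp_neg_mul_sq_mul_sub ha,
    integral_Ioi_sq_mul_exp_neg_mul_sq ha,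
    show -(a - b ^ 2 / (4 * a)) * r ^ 2 = -a * r ^ 2 + (b * r) ^ 2 / (4 * a) by field_simp; ring,
    exp_add]
  field_simp
  ring

lemma integral_Ioi_integral_Ioi_gaussianSinhIntegrand {a b : ℝ} (ha : 0 < a) (hb : b ≠ 0)
    (hab : b ^ 2 < 4 * a ^ 2) :
    ∫ r in Ioi 0, ∫ s in Ioi 0, gaussianSinhIntegrand a b r s
      = √(π / a) / (2 * a) *
          (√(π / (a - b ^ 2 / (4 * a))) / (4 * (a - b ^ 2 / (4 * a))) - √(π / a) / (4 * a)) := by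
  have ha' : 0 < a - b ^ 2 / (4 * a) := by
    rw [sub_pos, div_lt_iff₀ (by positivity)]
    nlinarith
  rw [setIntegral_congr_fun measurableSet_Ioi
      fun r hr => integral_Ioi_gaussianSinhIntegrand ha hb (mem_Ioi.mp hr).ne',
    integral_const_mul, integral_sub (integrableOn_Ioi_sq_mul_exp_neg_mul_sq ha')
      (integrableOn_Ioi_sq_mul_exp_neg_mul_sq ha),
    integral_Ioi_sq_mul_exp_neg_mul_sq ha', integral_Ioi_sq_mul_exp_neg_mul_sq ha]

/-- evaluation of the constant `J₀(3)` for the three-dimensional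
Gaussian coercivity computation. -/
theorem stmt_12 :
    (∫ r in Set.Ioi (0 : ℝ), ∫ s in Set.Ioi (0 : ℝ),
        Real.exp (-(5 * (r ^ 2 + s ^ 2)) / 12) *
          ((3 / (2 * r * s)) * (Real.exp (2 * r * s / 3) - Real.exp (-(2 * r * s / 3))) - 2)
          * (r ^ 2 * s ^ 2))
      = 784 * π / 125
    ∧ 8 * π - 216 * π / 125 = 784 * π / 125 := by
  refine ⟨?_, by ring⟩
  have hform : ∀ r s : ℝ,
      rexp (-(5 * (r ^ 2 + s ^ 2)) / 12) *
          ((3 / (2 * r * s)) * (rexp (2 * r * s / 3) - rexp (-(2 * r * s / 3))) - 2)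
          * (r ^ 2 * s ^ 2)
        = gaussianSinhIntegrand (5 / 12) (2 / 3) r s := by
    intro r s
    rw [gaussianSinhIntegrand,
      show -(5 * (r ^ 2 + s ^ 2)) / 12 = -(5 / 12 * (r ^ 2 + s ^ 2)) by ring,
      show 3 / (2 * r * s) = 1 / (2 / 3 * r * s) by ring,
      show 2 * r * s / 3 = 2 / 3 * r * s by ring]
  simp_rw [hform]
  rw [integral_Ioi_integral_Ioi_gaussianSinhIntegrand (by norm_num) (by norm_num) (by norm_num),
    show (5 / 12 : ℝ) - (2 / 3) ^ 2 / (4 * (5 / 12)) = 3 / 20 by norm_num]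
  have hprod : √(π / (5 / 12)) * √(π / (3 / 20)) = 4 * π := by
    rw [← sqrt_mul (by positivity), show π / (5 / 12) * (π / (3 / 20)) = (4 * π) ^ 2 by ring,
      sqrt_sq (by positivity)]
  have hsq : √(π / (5 / 12)) * √(π / (5 / 12)) = π / (5 / 12) := mul_self_sqrt (by positivity)
  linear_combination 2 * hprod - (18 / 25) * hsq
end
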